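/- Let n ≥ 2 and let f : ℝⁿ → R̄ⁿ be continuous with respect to the chordal distance q. Suppose there exist r > 0 and δ > 0 such that diam_q( f({y : |y − x| ≤ r}) ) ≥ δ for every x ∈ ℝⁿ. If (x_k) is a sequence in ℝⁿ and F : ℝⁿ → R̄ⁿ is such that the maps x ↦ f(x + x_k) converge to F uniformly with respect to q on every compact subset of ℝⁿ, then F is not constant. -/

import Mathlib

open Filter Topology Set
open scoped ENNReal NNReal

noncomputable section

/-- `E n` is the Euclidean space `ℝⁿ`. -/
abbrev E (n : ℕ) := EuclideanSpace ℝ (Fin n)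

/-- `RS n` is the one-point compactification `R̄ⁿ = ℝⁿ ∪ {∞}`, with `none` playing
the role of the point `∞`. -/
abbrev RS (n : ℕ) := Option (E n)

/-- The chordal (spherical) distance `q` on `R̄ⁿ`. -/
noncomputable def chordal {n : ℕ} : RS n → RS n → ℝ
  | some a, some b => ‖a - b‖ / (Real.sqrt (1 + ‖a‖ ^ 2) * Real.sqrt (1 + ‖b‖ ^ 2))
  | some a, none => 1 / Real.sqrt (1 + ‖a‖ ^ 2)
  | none, some b => 1 / Real.sqrt (1 + ‖b‖ ^ 2)
  | none, none => 0

/-- The chordal diameter of a subset of `R̄ⁿ`. -/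
noncomputable def qdiam {n : ℕ} (S : Set (RS n)) : ℝ :=
  sSup {d | ∃ a ∈ S, ∃ b ∈ S, d = chordal a b}

/-- The weighted ball `B_p(a, r) = {x : |x - a| < r |a|^(2-p)}`. -/
def Bp {n : ℕ} (p : ℝ) (a : E n) (r : ℝ) : Set (E n) :=
  {x | ‖x - a‖ < r * ‖a‖ ^ (2 - p)}

/-- `Qq α g x = limsup_{h → 0, h ≠ 0} q(g(x+h), g(x)) / |h|^α ∈ [0,∞]`. -/
noncomputable def Qq {n : ℕ} (α : ℝ) (g : E n → RS n) (x : E n) : ℝ≥0∞ :=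
  Filter.limsup (fun h : E n => ENNReal.ofReal (chordal (g (x + h)) (g x) / ‖h‖ ^ α))
    (𝓝[≠] (0 : E n))

/-- `(x_m)` is an `M_p`-sequence for `f` with parameter `l`:  `x_m ∈ ℝⁿ \ {0}`,
`|x_m| → ∞`, and for every subsequence and every `δ > 0` the set of values
`c ∈ R̄ⁿ` attained only finitely often by `f` in `⋃_k B_p(x_{m_k}, δ)` has at
most `l` elements. -/
def MpSeq {n : ℕ} (p : ℝ) (l : ℕ) (f : E n → RS n) (x : ℕ → E n) : Prop :=
  (∀ m, x m ≠ 0) ∧ Tendsto (fun m => ‖x m‖) atTop atTop ∧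
    ∀ φ : ℕ → ℕ, StrictMono φ → ∀ δ : ℝ, 0 < δ →
      {c : RS n | (f ⁻¹' {c} ∩ ⋃ k, Bp p (x (φ k)) δ).Finite}.Finite ∧
      {c : RS n | (f ⁻¹' {c} ∩ ⋃ k, Bp p (x (φ k)) δ).Finite}.ncard ≤ l

/-- `(x_m)` is a `μ_p`-sequence for `f` with parameter `l`: `x_m ∈ ℝⁿ \ {0}`,
`|x_m| → ∞`, and there are monotone decreasing null sequences `(L_m)`, `(r_m)` of
positive numbers such that `f(B_p(x_m, r_m))` covers `R̄ⁿ` except possibly `l`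
sets of chordal diameter at most `L_m`. -/
def MuSeq {n : ℕ} (p : ℝ) (l : ℕ) (f : E n → RS n) (x : ℕ → E n) : Prop :=
  (∀ m, x m ≠ 0) ∧ Tendsto (fun m => ‖x m‖) atTop atTop ∧
    ∃ L r : ℕ → ℝ, (∀ m, 0 < L m) ∧ (∀ m, 0 < r m) ∧ Antitone L ∧ Antitone r ∧
      Tendsto L atTop (𝓝 0) ∧ Tendsto r atTop (𝓝 0) ∧
      ∀ m, ∃ Es : Fin l → Set (RS n), (∀ j, qdiam (Es j) ≤ L m) ∧
        ∀ c : RS n, c ∉ ⋃ j, Es j → c ∈ f '' Bp p (x m) (r m)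

/-- Continuity of `g : ℝⁿ → R̄ⁿ` at a point, with respect to the chordal distance. -/
def QContinuousAt {n : ℕ} (g : E n → RS n) (x₀ : E n) : Prop :=
  ∀ ε : ℝ, 0 < ε → ∃ δ : ℝ, 0 < δ ∧ ∀ z : E n, ‖z - x₀‖ < δ → chordal (g z) (g x₀) < ε

/-- Stereographic projection of `R̄ⁿ` onto the sphere of diameter `1` centred at `(0, 1/2)`
in `ℝⁿ × ℝ`; the chordal distance is the Euclidean distance between the images. -/
def stereoProj {n : ℕ} : RS n → WithLp 2 (E n × ℝ)
  | some a => WithLp.toLp 2 ((1 + ‖a‖ ^ 2)⁻¹ • a, ‖a‖ ^ 2 / (1 + ‖a‖ ^ 2))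
  | none => WithLp.toLp 2 (0, 1)

lemma chordal_nonneg {n : ℕ} (a b : RS n) : 0 ≤ chordal a b := by
  cases a <;> cases b <;> simp only [chordal] <;> positivity

lemma chordal_sq_eq_norm_sub_sq {n : ℕ} (a b : RS n) :
    chordal a b ^ 2 = ‖stereoProj a - stereoProj b‖ ^ 2 := by
  have hpos (v : E n) : 0 < 1 + ‖v‖ ^ 2 := by positivity
  have hsqrt (v : E n) : √(1 + ‖v‖ ^ 2) ^ 2 = 1 + ‖v‖ ^ 2 := Real.sq_sqrt (hpos v).le
  have hnorm (v : E n) : ‖(1 + ‖v‖ ^ 2)⁻¹‖ = (1 + ‖v‖ ^ 2)⁻¹ := by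
    rw [norm_inv, Real.norm_of_nonneg (hpos v).le]
  rcases a with _ | a <;> rcases b with _ | b <;>
    simp only [chordal, stereoProj, ← WithLp.toLp_sub, WithLp.prod_norm_sq_eq_of_L2,
      WithLp.toLp_fst, WithLp.toLp_snd, Prod.mk_sub_mk, sub_self, zero_sub, sub_zero, norm_neg,
      norm_zero, div_pow, mul_pow, one_pow, hsqrt, norm_sub_sq_real (F := E n), norm_smul, hnorm,
      real_inner_smul_left, real_inner_smul_right, Real.norm_eq_abs, sq_abs]
  all_goals
    field_simp
    ring

lemma chordal_eq_norm_sub {n : ℕ} (a b : RS n) :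
    chordal a b = ‖stereoProj a - stereoProj b‖ :=
  (sq_eq_sq₀ (chordal_nonneg a b) (norm_nonneg _)).1 (chordal_sq_eq_norm_sub_sq a b)

lemma chordal_comm {n : ℕ} (a b : RS n) : chordal a b = chordal b a := by
  rw [chordal_eq_norm_sub, chordal_eq_norm_sub, norm_sub_rev]

lemma chordal_triangle {n : ℕ} (a b c : RS n) :
    chordal a b ≤ chordal a c + chordal c b := by
  simp only [chordal_eq_norm_sub]
  exact norm_sub_le_norm_sub_add_norm_sub _ _ _

lemma qdiam_le_of_forall_chordal_le {n : ℕ} {S : Set (RS n)} {c : RS n} {ε : ℝ}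
    (hε : 0 ≤ ε) (hS : ∀ a ∈ S, chordal a c ≤ ε) : qdiam S ≤ 2 * ε := by
  refine Real.sSup_le ?_ (by positivity)
  rintro _ ⟨a, ha, b, hb, rfl⟩
  calc chordal a b ≤ chordal a c + chordal c b := chordal_triangle a b c
    _ = chordal a c + chordal b c := by rw [chordal_comm c b]
    _ ≤ 2 * ε := by linarith [hS a ha, hS b hb]

theorem stmt_12_general (n : ℕ) (f : E n → RS n)
    (r δ : ℝ) (hδ : 0 < δ)
    (hlow : ∀ x : E n, δ ≤ qdiam (f '' {y | ‖y - x‖ ≤ r}))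
    (x : ℕ → E n) (F : E n → RS n)
    (hconv : ∀ K : Set (E n), IsCompact K → ∀ ε : ℝ, 0 < ε → ∃ N : ℕ, ∀ k ≥ N, ∀ z ∈ K,
      chordal (f (z + x k)) (F z) < ε) :
    ¬ ∃ c : RS n, ∀ z : E n, F z = c := by
  rintro ⟨c, hc⟩
  obtain ⟨N, hN⟩ := hconv (Metric.closedBall 0 r) (isCompact_closedBall 0 r) (δ / 3)
    (by positivity)
  have hclose : ∀ a ∈ f '' {y | ‖y - x N‖ ≤ r}, chordal a c ≤ δ / 3 := by
    rintro _ ⟨y, hy, rfl⟩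
    have hyN := hN N le_rfl (y - x N) (by simpa using hy)
    rw [sub_add_cancel, hc] at hyN
    exact hyN.le
  linarith [hlow (x N), qdiam_le_of_forall_chordal_le (by positivity) hclose]

/-- Let `f : ℝⁿ → R̄ⁿ` be continuous w.r.t. the chordal distance and
suppose `diam_q(f(closed ball(x, r))) ≥ δ` for all `x` (with fixed `r, δ > 0`). If the
translates `x ↦ f(x + x_k)` converge to `F` uniformly on every compact set, then `F`
is not constant. -/
theorem stmt_12 (n : ℕ) (hn : 2 ≤ n) (f : E n → RS n)
    (hf : ∀ x : E n, QContinuousAt f x)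
    (r δ : ℝ) (hr : 0 < r) (hδ : 0 < δ)
    (hlow : ∀ x : E n, δ ≤ qdiam (f '' {y | ‖y - x‖ ≤ r}))
    (x : ℕ → E n) (F : E n → RS n)
    (hconv : ∀ K : Set (E n), IsCompact K → ∀ ε : ℝ, 0 < ε → ∃ N : ℕ, ∀ k ≥ N, ∀ z ∈ K,
      chordal (f (z + x k)) (F z) < ε) :
    ¬ ∃ c : RS n, ∀ z : E n, F z = c :=
  stmt_12_general n f r δ hδ hlow x F hconv
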